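/- Let A be an m-stochastic tensor (m ≥ 3) reducible with respect to a proper subset I (A_{i_1...i_m} = 0 whenever i_1 ∈ I and i_2,...,i_m ∉ I). Then A is reducible with respect to I in every index position: for every r ∈ {1,...,m}, A_{i_1...i_m} = 0 whenever i_r ∈ I and all other indices lie outside I. -/
import Mathlib

open Finset

/-- An `m`-stochastic tensor of dimension `N`: all entries are nonnegative and
the sum over any single index (the others being fixed) equals `1`. -/
def MStochastic {N m : ℕ} (A : (Fin m → Fin N) → ℝ) : Prop :=
  (∀ f, 0 ≤ A f) ∧
    ∀ (t : Fin m) (f : Fin m → Fin N), ∑ v : Fin N, A (Function.update f t v) = 1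

/-- The multilinear action of the tensor `A`, with output in slot `t` and the
probability vector `p s` fed into each input slot `s ≠ t`:
`A[p]_{i} = Σ_{g, g t = i} A_g · Π_{s ≠ t} (p s)_{g s}`. -/
def mAct {N m : ℕ} (A : (Fin m → Fin N) → ℝ) (t : Fin m) (p : Fin m → Fin N → ℝ) :
    Fin N → ℝ :=
  fun i => ∑ g : Fin m → Fin N,
    if g t = i then A g * ∏ s ∈ Finset.univ.erase t, p s (g s) else 0

lemma splitAt_symm_apply_ne {m N : ℕ} (r : Fin m) (v : Fin N) (h : {j : Fin m // j ≠ r} → Fin N)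
    (s : Fin m) (hs : s ≠ r) : (Equiv.funSplitAt r (Fin N)).symm (v, h) s = h ⟨s, hs⟩ := by
  simp [Equiv.funSplitAt, Equiv.piSplitAt, hs]

lemma splitAt_symm_update {m N : ℕ} (r : Fin m) (v w : Fin N) (h : {j : Fin m // j ≠ r} → Fin N) :
    (Equiv.funSplitAt r (Fin N)).symm (v, h)
      = Function.update ((Equiv.funSplitAt r (Fin N)).symm (w, h)) r v := by
  funext s
  rcases eq_or_ne s r with rfl | hs
  · simp [Equiv.funSplitAt, Equiv.piSplitAt]
  · rw [Function.update_of_ne hs, splitAt_symm_apply_ne r v h s hs,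
      splitAt_symm_apply_ne r w h s hs]

theorem reducible_all_slots {N m : ℕ} (hm : 3 ≤ m)
    (A : (Fin m → Fin N) → ℝ) (hA : MStochastic A)
    (I : Finset (Fin N)) (hproper : I ≠ Finset.univ)
    (hred : ∀ g : Fin m → Fin N,
      g ⟨0, by omega⟩ ∈ I → (∀ t : Fin m, t ≠ ⟨0, by omega⟩ → g t ∉ I) → A g = 0) :
    ∀ r : Fin m, ∀ g : Fin m → Fin N,
      g r ∈ I → (∀ t : Fin m, t ≠ r → g t ∉ I) → A g = 0 := by
  obtain ⟨hpos, hsum⟩ := hA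
  classical
  obtain ⟨x0, hx0⟩ : ∃ x : Fin N, x ∉ I := by
    by_contra hc
    push_neg at hc
    exact hproper (Finset.eq_univ_iff_forall.2 hc)
  set S : Fin m → ℝ := fun r => ∑ g : Fin m → Fin N,
    if g r ∈ I ∧ ∀ s, s ≠ r → g s ∉ I then A g else 0 with hS
  set U : ℝ := ∑ g : Fin m → Fin N, if ∀ s, g s ∉ I then A g else 0 with hU
  set W : Fin m → ℝ := fun r => ∑ g : Fin m → Fin N,
    if ∀ s, s ≠ r → g s ∉ I then A g else 0 with hW
  have hWSU : ∀ r, W r = S r + U := by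
    intro r
    rw [hW, hS, ← Finset.sum_add_distrib]
    refine Finset.sum_congr rfl fun g _ => ?_
    by_cases hgr : g r ∈ I
    · have h2 : ¬ (∀ s, g s ∉ I) := fun h => h r hgr
      by_cases hc : ∀ s, s ≠ r → g s ∉ I
      · simp [hc, hgr, h2]
      · simp [hc, hgr, h2, fun h : (g r ∈ I ∧ ∀ s, s ≠ r → g s ∉ I) => hc h.2]
    · have hiff : (∀ s, g s ∉ I) ↔ (∀ s, s ≠ r → g s ∉ I) := by
        constructor
        · exact fun h s _ => h s
        · intro h s
          rcases eq_or_ne s r with rfl | hs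
          · exact hgr
          · exact h s hs
      by_cases hc : ∀ s, s ≠ r → g s ∉ I
      · rw [if_pos hc, if_neg (fun h : (g r ∈ I ∧ _) => hgr h.1), if_pos (hiff.mpr hc), zero_add]
      · rw [if_neg hc, if_neg (fun h : (g r ∈ I ∧ _) => hgr h.1),
          if_neg (fun h => hc (hiff.mp h)), zero_add]
  have hWval : ∀ r, W r = (Iᶜ.card : ℝ) ^ (m - 1) := by
    intro r
    simp only [hW]
    rw [← Equiv.sum_comp (Equiv.funSplitAt r (Fin N)).symm]
    rw [Fintype.sum_prod_type_right]
    have key : ∀ h : {j : Fin m // j ≠ r} → Fin N,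
        (∑ v : Fin N, if ∀ s, s ≠ r → (Equiv.funSplitAt r (Fin N)).symm (v, h) s ∉ I
            then A ((Equiv.funSplitAt r (Fin N)).symm (v, h)) else 0)
        = if ∀ j : {j : Fin m // j ≠ r}, h j ∉ I then 1 else 0 := by
      intro h
      have hcond : ∀ v : Fin N,
          (∀ s, s ≠ r → (Equiv.funSplitAt r (Fin N)).symm (v, h) s ∉ I)
            ↔ (∀ j : {j : Fin m // j ≠ r}, h j ∉ I) := by
        intro v
        constructor
        · intro hh j
          have := hh j j.2
          rwa [splitAt_symm_apply_ne r v h j j.2] at this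
        · intro hh s hs
          rw [splitAt_symm_apply_ne r v h s hs]
          exact hh ⟨s, hs⟩
      by_cases hc : ∀ j : {j : Fin m // j ≠ r}, h j ∉ I
      · rw [if_pos hc]
        calc (∑ v : Fin N, if ∀ s, s ≠ r → (Equiv.funSplitAt r (Fin N)).symm (v, h) s ∉ I
              then A ((Equiv.funSplitAt r (Fin N)).symm (v, h)) else 0)
            = ∑ v : Fin N, A (Function.update
                ((Equiv.funSplitAt r (Fin N)).symm (x0, h)) r v) := by
              refine Finset.sum_congr rfl fun v _ => ?_
              rw [if_pos ((hcond v).mpr hc), splitAt_symm_update r v x0 h]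
          _ = 1 := hsum r _
      · rw [if_neg hc]
        refine Finset.sum_eq_zero fun v _ => ?_
        rw [if_neg (fun hx => hc ((hcond v).mp hx))]
    rw [Fintype.sum_congr _ _ key]
    have step1 : ∀ h : {j : Fin m // j ≠ r} → Fin N,
        (if ∀ j : {j : Fin m // j ≠ r}, h j ∉ I then (1:ℝ) else 0)
          = ∏ j : {j : Fin m // j ≠ r}, (if h j ∉ I then (1:ℝ) else 0) := by
      intro h
      by_cases hc : ∀ j : {j : Fin m // j ≠ r}, h j ∉ I
      · rw [if_pos hc, Finset.prod_eq_one fun j _ => if_pos (hc j)]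
      · push_neg at hc
        obtain ⟨j, hj⟩ := hc
        rw [if_neg (by push_neg; exact ⟨j, hj⟩)]
        exact (Finset.prod_eq_zero (Finset.mem_univ j) (by simp [hj])).symm
    rw [Fintype.sum_congr _ _ step1]
    have := Finset.prod_univ_sum (fun _ : {j : Fin m // j ≠ r} => (Finset.univ : Finset (Fin N)))
      (fun _ v => if v ∉ I then (1:ℝ) else 0)
    rw [Fintype.piFinset_univ] at this
    rw [← this]
    have hsv : (∑ v : Fin N, if v ∉ I then (1:ℝ) else 0) = (Iᶜ.card : ℝ) := by
      have hfilt : Finset.filter (fun v => v ∉ I) Finset.univ = Iᶜ := by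
        ext v; simp
      rw [Finset.sum_boole, hfilt]
    rw [Finset.prod_congr rfl fun j _ => hsv, Finset.prod_const, Finset.card_univ]
    congr 1
    simp [Fintype.card_subtype_compl]
  have hS0 : S ⟨0, by omega⟩ = 0 := by
    rw [hS]
    refine Finset.sum_eq_zero fun g _ => ?_
    by_cases hc : g ⟨0, by omega⟩ ∈ I ∧ ∀ s, s ≠ ⟨0, by omega⟩ → g s ∉ I
    · rw [if_pos hc]; exact hred g hc.1 hc.2
    · rw [if_neg hc]
  intro r g hgr hgo
  have hSr : S r = 0 := by
    have h1 := hWSU r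
    have h0 := hWSU ⟨0, by omega⟩
    have h2 := hWval r
    have h3 := hWval ⟨0, by omega⟩
    rw [hS0] at h0
    linarith
  have hnn : ∀ g ∈ (Finset.univ : Finset (Fin m → Fin N)),
      (0:ℝ) ≤ if g r ∈ I ∧ ∀ s, s ≠ r → g s ∉ I then A g else 0 := by
    intro g _
    split
    · exact hpos g
    · exact le_refl 0
  have := (Finset.sum_eq_zero_iff_of_nonneg hnn).1 hSr g (Finset.mem_univ g)
  rwa [if_pos ⟨hgr, hgo⟩] at this
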